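/- Let (E,d) be a metric space, p ≥ 1, and set R = 1 + 2^p + 3^{p−1}. Let T, S > 0, let τ : [0,T] → [0,S] be nondecreasing and right-continuous with τ(0) = 0 and τ(T) = S, let y : [0,S] → E be continuous, and define x := y ∘ τ : [0,T] → E. Suppose η ≥ 1 is a constant such that for every jump time t of τ (i.e. t ∈ (0,T] with τ(t−) < τ(t)) the restriction γ_t of y to [τ(t−), τ(t)] satisfies ‖γ_t‖_{p-var;[τ(t−),τ(t)]} ≤ η · d(y(τ(t−)), y(τ(t))). Then ‖y‖_{p-var;[0,S]}^p ≤ (R + η^p (R + 3^{p−1})) · ‖x‖_{p-var;[0,T]}^p. -/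

import Mathlib

open scoped ENNReal

/-- The `p`-th power of the `p`-variation of a path `x` over `[a,b]`:
the supremum over all finite partitions `a = t₀ ≤ t₁ ≤ … ≤ tₙ = b` of
`∑ᵢ d(x_{tᵢ}, x_{tᵢ₊₁})^p`, with value in `[0,∞]`. -/
noncomputable def pVar {E : Type*} [PseudoMetricSpace E] (p : ℝ) (x : ℝ → E) (a b : ℝ) : ℝ≥0∞ :=
  ⨆ (n : ℕ) (t : Fin (n + 1) → ℝ) (_ : Monotone t) (_ : t 0 = a) (_ : t (Fin.last n) = b),
    ∑ i : Fin n, edist (x (t i.castSucc)) (x (t i.succ)) ^ p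

/-- The `p`-variation (norm) itself, i.e. the `1/p`-th power of `pVar`. -/
noncomputable def pVarNorm {E : Type*} [PseudoMetricSpace E] (p : ℝ) (x : ℝ → E) (a b : ℝ) :
    ℝ≥0∞ :=
  pVar p x a b ^ (1 / p)

/-!
Let `g r` be the first time at which `τ` reaches the level `r`. By right-continuity
`τ(g r −) ≤ r ≤ τ(g r)`, so `r` either lies in the range of `τ` or inside the jump interval of
`τ` at `g r`. Given a subdivision `(sᵢ)` of `[0,S]`, route each increment `y sᵢ → y sᵢ₊₁`
through `y (τ (g sᵢ))` and `y (τ (g sᵢ₊₁))`. The middle pieces form a subdivision sum of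
`x = y ∘ τ`; the pieces inside one jump interval add up to at most twice the `p`-variation of `y`
over it, which the hypothesis bounds by `η^p` times the jump `d(x(t−), x(t))^p`; and the jumps of
`x` at finitely many times sum to at most `‖x‖ₚ^p`. With
`(a + b + c)^p ≤ 3^(p-1) (a^p + b^p + c^p)` this gives the constant `3^(p-1) (1 + 2 η^p)`, which is
at most the stated one.
-/

open Set Filter Topology

section PVariation

variable {E : Type*} [PseudoMetricSpace E] {p : ℝ} {f : ℝ → E} {a b c : ℝ}

/-- Frozen at `b` from index `n` on, so that every point lies in `[a, b]`. -/
structure Subdivision (a b : ℝ) where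
  n : ℕ
  t : ℕ → ℝ
  mono : Monotone t
  t_zero : t 0 = a
  t_of_le : ∀ m, n ≤ m → t m = b

namespace Subdivision

noncomputable def sum (P : Subdivision a b) (p : ℝ) (f : ℝ → E) : ℝ≥0∞ :=
  ∑ i ∈ Finset.range P.n, edist (f (P.t i)) (f (P.t (i + 1))) ^ p

theorem t_mem_Icc (P : Subdivision a b) (i : ℕ) : P.t i ∈ Icc a b := by
  constructor
  · simpa [P.t_zero] using P.mono (Nat.zero_le i)
  · simpa [P.t_of_le _ (le_max_right i P.n)] using P.mono (le_max_left i P.n)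

def single (h : a ≤ b) : Subdivision a b where
  n := 1
  t m := if m = 0 then a else b
  mono i j hij := by dsimp only; split_ifs <;> first | exact le_rfl | exact h | omega
  t_zero := if_pos rfl
  t_of_le m hm := if_neg (by omega)

theorem sum_single (h : a ≤ b) : (single h).sum p f = edist (f a) (f b) ^ p := by
  simp [sum, single]

def append (P : Subdivision a b) (Q : Subdivision b c) : Subdivision a c where
  n := P.n + Q.n
  t m := if m ≤ P.n then P.t m else Q.t (m - P.n)
  mono i j hij := by
    dsimp only
    split_ifs with hi hj hj
    · exact P.mono hij
    · calc P.t i ≤ P.t P.n := P.mono hi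
        _ = Q.t 0 := (P.t_of_le _ le_rfl).trans Q.t_zero.symm
        _ ≤ Q.t (j - P.n) := Q.mono (Nat.zero_le _)
    · omega
    · exact Q.mono (by omega)
  t_zero := by simp [P.t_zero]
  t_of_le m hm := by
    split_ifs with h
    · rw [P.t_of_le m (by omega), ← Q.t_zero, Q.t_of_le 0 (by omega)]
    · exact Q.t_of_le _ (by omega)

theorem append_t_add (P : Subdivision a b) (Q : Subdivision b c) (k : ℕ) :
    (P.append Q).t (P.n + k) = Q.t k := by
  simp only [append]
  split_ifs with h
  · rw [show k = 0 by omega, add_zero, P.t_of_le _ le_rfl, Q.t_zero]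
  · rw [Nat.add_sub_cancel_left]

theorem sum_append (P : Subdivision a b) (Q : Subdivision b c) :
    (P.append Q).sum p f = P.sum p f + Q.sum p f := by
  rw [sum, show (P.append Q).n = P.n + Q.n from rfl, Finset.sum_range_add]
  congr 1
  · refine Finset.sum_congr rfl fun i hi => ?_
    have hi := Finset.mem_range.1 hi
    simp only [append, if_pos hi.le, if_pos (show i + 1 ≤ P.n by omega)]
  · simp only [add_assoc, append_t_add]
    rfl

def ofMonotone {t : ℕ → ℝ} (ht : Monotone t) (n : ℕ) : Subdivision (t 0) (t n) where
  n := n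
  t m := t (min m n)
  mono i j hij := ht (min_le_min_right n hij)
  t_zero := by simp
  t_of_le m hm := by simp [hm]

theorem sum_ofMonotone {t : ℕ → ℝ} (ht : Monotone t) (n : ℕ) :
    (ofMonotone ht n).sum p f = ∑ i ∈ Finset.range n, edist (f (t i)) (f (t (i + 1))) ^ p := by
  refine Finset.sum_congr rfl fun i hi => ?_
  have hi := Finset.mem_range.1 hi
  simp only [ofMonotone, min_eq_left hi.le, min_eq_left (Nat.succ_le_of_lt hi)]

end Subdivision

theorem pVar_eq_iSup_subdivision : pVar p f a b = ⨆ P : Subdivision a b, P.sum p f := by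
  refine le_antisymm ?_ (iSup_le fun P => ?_)
  · refine iSup_le fun n => iSup_le fun t => iSup_le fun ht => iSup_le fun h0 =>
      iSup_le fun hn => le_iSup_of_le
        ⟨n, fun m => t ⟨min m n, by omega⟩, fun i j hij => ht (by simp [Fin.le_def]; omega),
          by simpa using h0, fun m hm => by simp only [min_eq_right hm]; exact hn⟩ (le_of_eq ?_)
    rw [Subdivision.sum, ← Fin.sum_univ_eq_sum_range]
    refine Finset.sum_congr rfl fun i _ => ?_
    congr 4 <;> ext <;> simp
  · refine le_iSup_of_le P.n <| le_iSup_of_le (fun i => P.t i) <|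
      le_iSup_of_le (P.mono.comp Fin.val_strictMono.monotone) <|
      le_iSup_of_le (by simpa using P.t_zero) <|
      le_iSup_of_le (P.t_of_le _ le_rfl) (le_of_eq ?_)
    rw [Subdivision.sum, ← Fin.sum_univ_eq_sum_range]
    simp

theorem Subdivision.sum_le_pVar (P : Subdivision a b) : P.sum p f ≤ pVar p f a b :=
  pVar_eq_iSup_subdivision (p := p) (f := f) ▸ le_iSup (fun P : Subdivision a b => P.sum p f) P

theorem edist_rpow_le_pVar (h : a ≤ b) : edist (f a) (f b) ^ p ≤ pVar p f a b :=
  Subdivision.sum_single (p := p) (f := f) h ▸ (Subdivision.single h).sum_le_pVar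

theorem pVar_add_pVar_le (hab : a ≤ b) (hbc : b ≤ c) :
    pVar p f a b + pVar p f b c ≤ pVar p f a c := by
  have : Nonempty (Subdivision a b) := ⟨.single hab⟩
  have : Nonempty (Subdivision b c) := ⟨.single hbc⟩
  simp only [pVar_eq_iSup_subdivision]
  refine ENNReal.iSup_add_iSup_le fun P Q => ?_
  rw [← Subdivision.sum_append]
  exact le_iSup (fun R : Subdivision a c => R.sum p f) (P.append Q)

theorem pVar_anti_left (ha : a ≤ b) (hb : b ≤ c) : pVar p f b c ≤ pVar p f a c :=
  le_add_self.trans (pVar_add_pVar_le ha hb)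

theorem pVar_mono_right (hb : a ≤ b) (hc : b ≤ c) : pVar p f a b ≤ pVar p f a c :=
  le_self_add.trans (pVar_add_pVar_le hb hc)

theorem pVar_self (hp : 0 < p) : pVar p f a a = 0 := by
  refine le_antisymm ?_ zero_le
  rw [pVar_eq_iSup_subdivision]
  refine iSup_le fun P => le_of_eq (Finset.sum_eq_zero fun i _ => ?_)
  have hconst : ∀ j, P.t j = a := fun j => le_antisymm (P.t_mem_Icc j).2 (P.t_mem_Icc j).1
  rw [hconst, hconst, edist_self, ENNReal.zero_rpow_of_pos hp]

theorem pVar_le_of_pVarNorm_le {η : ℝ} {u v : E} (hp : 0 < p) (hη : 0 ≤ η)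
    (h : pVarNorm p f a b ≤ ENNReal.ofReal (η * dist u v)) :
    pVar p f a b ≤ ENNReal.ofReal η ^ p * edist u v ^ p := by
  have := ENNReal.rpow_le_rpow h hp.le
  rwa [pVarNorm, one_div, ENNReal.rpow_inv_rpow hp.ne', ENNReal.ofReal_mul hη,
    ENNReal.mul_rpow_of_nonneg _ _ hp.le, ← edist_dist] at this

theorem sum_range_edist_rpow_le_pVar {t : ℕ → ℝ} (ht : Monotone t) (htab : ∀ i, t i ∈ Icc a b)
    (n : ℕ) : ∑ i ∈ Finset.range n, edist (f (t i)) (f (t (i + 1))) ^ p ≤ pVar p f a b := by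
  rw [← Subdivision.sum_ofMonotone ht]
  exact (Subdivision.ofMonotone ht n).sum_le_pVar.trans <|
    (pVar_mono_right (ht (Nat.zero_le n)) (htab n).2).trans (pVar_anti_left (htab 0).1 (htab 0).2)

theorem pVar_add_edist_rpow_le_of_tendsto {m : ℝ} {z : E} (hz : Tendsto f (𝓝[<] b) (𝓝 z))
    (ham : a ≤ m) (hmb : m < b) : pVar p f a m + edist z (f b) ^ p ≤ pVar p f a b := by
  refine le_of_tendsto
    (tendsto_const_nhds.add ((hz.edist tendsto_const_nhds).ennrpow_const p)) ?_
  filter_upwards [Ioo_mem_nhdsLT hmb] with u hu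
  calc pVar p f a m + edist (f u) (f b) ^ p ≤ pVar p f a m + pVar p f m b := by
        gcongr
        exact (edist_rpow_le_pVar hu.2.le).trans (pVar_anti_left hu.1.le hu.2.le)
    _ ≤ pVar p f a b := pVar_add_pVar_le ham hmb.le

theorem sum_edist_rpow_le_pVar_of_tendsto {z : ℝ → E}
    (hz : ∀ t ∈ Ioc a c, Tendsto f (𝓝[<] t) (𝓝 (z t))) {F : Finset ℝ}
    (hF : ∀ t ∈ F, t ∈ Ioc a c) : ∑ t ∈ F, edist (z t) (f t) ^ p ≤ pVar p f a c := by
  induction F using Finset.induction_on_max generalizing c with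
  | empty => simp
  | insert x F hlt ih =>
    have hx := hF x (Finset.mem_insert_self x F)
    set m := (insert a F).max' (Finset.insert_nonempty a F)
    have ham : a ≤ m := (insert a F).le_max' a (Finset.mem_insert_self a F)
    have hmx : m < x := by
      refine ((insert a F).max'_lt_iff _).2 fun t ht => ?_
      rcases Finset.mem_insert.1 ht with rfl | ht
      exacts [hx.1, hlt t ht]
    have hFm : ∀ t ∈ F, t ∈ Ioc a m := fun t ht =>
      ⟨(hF t (Finset.mem_insert_of_mem ht)).1,
        (insert a F).le_max' t (Finset.mem_insert_of_mem ht)⟩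
    have hxF : x ∉ F := fun h => (hlt x h).false
    calc ∑ t ∈ insert x F, edist (z t) (f t) ^ p
        = edist (z x) (f x) ^ p + ∑ t ∈ F, edist (z t) (f t) ^ p := Finset.sum_insert hxF
      _ ≤ pVar p f a m + edist (z x) (f x) ^ p := by
        rw [add_comm]
        gcongr
        exact ih (fun t ht => hz t ⟨ht.1, ht.2.trans (hmx.le.trans hx.2)⟩) hFm
      _ ≤ pVar p f a x := pVar_add_edist_rpow_le_of_tendsto (hz x hx) ham hmx
      _ ≤ pVar p f a c := pVar_mono_right (ham.trans hmx.le) hx.2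

theorem ENNReal.add_add_rpow_le (hp : 1 ≤ p) (x y z : ℝ≥0∞) :
    (x + y + z) ^ p ≤ 3 ^ (p - 1) * (x ^ p + y ^ p + z ^ p) := by
  simpa [Fin.sum_univ_three] using
    ENNReal.rpow_sum_le_const_mul_sum_rpow (s := Finset.univ) (f := ![x, y, z]) hp

section Detour

variable {φ : ℝ → ℝ} {s g : ℕ → ℝ}

/-- The pieces left over when the step `s i → s (i + 1)` is routed through the anchors
`φ (g i)`, `φ (g (i + 1))`; a step between points with a common anchor is kept whole. -/
noncomputable def detourCost (p : ℝ) (f : ℝ → E) (φ : ℝ → ℝ) (s g : ℕ → ℝ) (i : ℕ) : ℝ≥0∞ :=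
  if g i = g (i + 1) then edist (f (s i)) (f (s (i + 1))) ^ p
  else edist (f (s i)) (f (φ (g i))) ^ p + edist (f (φ (g (i + 1)))) (f (s (i + 1))) ^ p

theorem edist_rpow_le_detourCost (hp : 1 ≤ p) (i : ℕ) :
    edist (f (s i)) (f (s (i + 1))) ^ p ≤
      3 ^ (p - 1) * (edist (f (φ (g i))) (f (φ (g (i + 1)))) ^ p + detourCost p f φ s g i) := by
  unfold detourCost
  split_ifs with hg
  · have h3 : (1 : ℝ≥0∞) ≤ 3 ^ (p - 1) :=
      (ENNReal.one_rpow (p - 1)).symm.le.trans (ENNReal.rpow_le_rpow (by norm_num) (by linarith))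
    calc edist (f (s i)) (f (s (i + 1))) ^ p
        ≤ edist (f (φ (g i))) (f (φ (g (i + 1)))) ^ p + edist (f (s i)) (f (s (i + 1))) ^ p :=
          le_add_self
      _ ≤ _ := le_mul_of_one_le_left' h3
  · calc edist (f (s i)) (f (s (i + 1))) ^ p
        ≤ (edist (f (s i)) (f (φ (g i))) + edist (f (φ (g i))) (f (φ (g (i + 1))))
            + edist (f (φ (g (i + 1)))) (f (s (i + 1)))) ^ p :=
          ENNReal.rpow_le_rpow (edist_triangle4 _ _ _ _) (by linarith)
      _ ≤ _ := (ENNReal.add_add_rpow_le hp _ _ _).trans_eq (by ring)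

theorem sum_detourCost_add_pVar_le (hg : Monotone g) (hs : Monotone s)
    (hsφ : ∀ i, s i ≤ φ (g i)) {B : ℝ → ℝ≥0∞} (hB : ∀ i, pVar p f (s i) (φ (g i)) ≤ B (g i))
    (k : ℕ) :
    ∑ i ∈ Finset.range k, detourCost p f φ s g i + pVar p f (s k) (φ (g k)) ≤
      2 * ∑ t ∈ (Finset.range (k + 1)).image g, B t := by
  induction k with
  | zero => simpa [two_mul] using le_add_right (hB 0)
  | succ k ih =>
    rw [Finset.sum_range_succ, detourCost]
    split_ifs with hgk
    · have hstep : edist (f (s k)) (f (s (k + 1))) ^ p + pVar p f (s (k + 1)) (φ (g (k + 1)))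
          ≤ pVar p f (s k) (φ (g k)) := by
        rw [← hgk]
        exact (add_le_add_left (edist_rpow_le_pVar (hs k.le_succ)) _).trans
          (pVar_add_pVar_le (hs k.le_succ) (hgk ▸ hsφ (k + 1)))
      calc ∑ i ∈ Finset.range k, detourCost p f φ s g i
            + edist (f (s k)) (f (s (k + 1))) ^ p + pVar p f (s (k + 1)) (φ (g (k + 1)))
          ≤ ∑ i ∈ Finset.range k, detourCost p f φ s g i + pVar p f (s k) (φ (g k)) := by
            rw [add_assoc]; gcongr
        _ ≤ 2 * ∑ t ∈ (Finset.range (k + 1)).image g, B t := ih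
        _ ≤ 2 * ∑ t ∈ (Finset.range (k + 2)).image g, B t := by
            gcongr
            omega
    · have hnew : g (k + 1) ∉ (Finset.range (k + 1)).image g := by
        simp only [Finset.mem_image, Finset.mem_range, not_exists, not_and]
        intro j hj hgj
        exact hgk (le_antisymm (hg k.le_succ) (hgj ▸ hg (Nat.lt_succ_iff.1 hj)))
      have hleave : edist (f (s k)) (f (φ (g k))) ^ p ≤ pVar p f (s k) (φ (g k)) :=
        edist_rpow_le_pVar (hsφ k)
      have henter : edist (f (φ (g (k + 1)))) (f (s (k + 1))) ^ p ≤ B (g (k + 1)) := by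
        rw [edist_comm]
        exact (edist_rpow_le_pVar (hsφ (k + 1))).trans (hB (k + 1))
      calc ∑ i ∈ Finset.range k, detourCost p f φ s g i
            + (edist (f (s k)) (f (φ (g k))) ^ p + edist (f (φ (g (k + 1)))) (f (s (k + 1))) ^ p)
            + pVar p f (s (k + 1)) (φ (g (k + 1)))
          = (∑ i ∈ Finset.range k, detourCost p f φ s g i + edist (f (s k)) (f (φ (g k))) ^ p)
            + (edist (f (φ (g (k + 1)))) (f (s (k + 1))) ^ p
              + pVar p f (s (k + 1)) (φ (g (k + 1)))) := by ring
        _ ≤ (∑ i ∈ Finset.range k, detourCost p f φ s g i + pVar p f (s k) (φ (g k)))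
            + (B (g (k + 1)) + B (g (k + 1))) := by gcongr; exact hB (k + 1)
        _ ≤ 2 * ∑ t ∈ (Finset.range (k + 1)).image g, B t + 2 * B (g (k + 1)) := by
            rw [two_mul (B _)]; gcongr
        _ = 2 * ∑ t ∈ (Finset.range (k + 1 + 1)).image g, B t := by
            rw [Finset.range_add_one (n := k + 1), Finset.image_insert, Finset.sum_insert hnew]
            ring

theorem sum_edist_rpow_le_of_detour (hp : 1 ≤ p) (hg : Monotone g) (hs : Monotone s)
    (hsφ : ∀ i, s i ≤ φ (g i)) {B : ℝ → ℝ≥0∞} (hB : ∀ i, pVar p f (s i) (φ (g i)) ≤ B (g i))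
    (n : ℕ) :
    ∑ i ∈ Finset.range n, edist (f (s i)) (f (s (i + 1))) ^ p ≤
      3 ^ (p - 1) * (∑ i ∈ Finset.range n, edist (f (φ (g i))) (f (φ (g (i + 1)))) ^ p
        + 2 * ∑ t ∈ (Finset.range (n + 1)).image g, B t) := by
  calc ∑ i ∈ Finset.range n, edist (f (s i)) (f (s (i + 1))) ^ p
      ≤ ∑ i ∈ Finset.range n, 3 ^ (p - 1) *
          (edist (f (φ (g i))) (f (φ (g (i + 1)))) ^ p + detourCost p f φ s g i) :=
        Finset.sum_le_sum fun i _ => edist_rpow_le_detourCost hp i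
    _ = 3 ^ (p - 1) * (∑ i ∈ Finset.range n, edist (f (φ (g i))) (f (φ (g (i + 1)))) ^ p
          + ∑ i ∈ Finset.range n, detourCost p f φ s g i) := by
        rw [← Finset.mul_sum, Finset.sum_add_distrib]
    _ ≤ _ := by
        gcongr
        exact le_self_add.trans (sum_detourCost_add_pVar_le hg hs hsφ hB n)

end Detour

theorem MonotoneOn.tendsto_nhdsLT_sSup_image_Ico {α β : Type*} [LinearOrder α]
    [TopologicalSpace α] [OrderTopology α] [ConditionallyCompleteLinearOrder β]
    [TopologicalSpace β] [OrderTopology β] {τ : α → β} {a b : α} (hτ : MonotoneOn τ (Icc a b))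
    (hab : a < b) : Tendsto τ (𝓝[<] b) (𝓝 (sSup (τ '' Ico a b))) := by
  have hbdd : BddAbove (τ '' Ico a b) :=
    ⟨τ b, forall_mem_image.2 fun u hu =>
      hτ (Ico_subset_Icc_self hu) (right_mem_Icc.2 hab.le) hu.2.le⟩
  refine tendsto_order.2 ⟨fun l hl => ?_, fun m hm => ?_⟩
  · obtain ⟨_, ⟨u, hu, rfl⟩, hlu⟩ := exists_lt_of_lt_csSup ((nonempty_Ico.2 hab).image τ) hl
    filter_upwards [Ioo_mem_nhdsLT hu.2] with v hv
    exact hlu.trans_le (hτ (Ico_subset_Icc_self hu) ⟨hu.1.trans hv.1.le, hv.2.le⟩ hv.1.le)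
  · filter_upwards [Ioo_mem_nhdsLT hab] with v hv
    exact (le_csSup hbdd (mem_image_of_mem τ (Ioo_subset_Ico_self hv))).trans_lt hm

section TimeChange

variable {τ : ℝ → ℝ} {T r : ℝ}

noncomputable def firstHit (τ : ℝ → ℝ) (T r : ℝ) : ℝ := sInf {u ∈ Icc 0 T | r ≤ τ u}

theorem firstHit_mem_Icc (hT : 0 ≤ T) (hr : r ≤ τ T) : firstHit τ T r ∈ Icc 0 T :=
  ⟨le_csInf ⟨T, right_mem_Icc.2 hT, hr⟩ fun _ hu => hu.1.1,
    csInf_le ⟨0, fun _ hu => hu.1.1⟩ ⟨right_mem_Icc.2 hT, hr⟩⟩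

theorem firstHit_mono {r' : ℝ} (hT : 0 ≤ T) (hr' : r' ≤ τ T) (h : r ≤ r') :
    firstHit τ T r ≤ firstHit τ T r' :=
  csInf_le_csInf ⟨0, fun _ hu => hu.1.1⟩ ⟨T, right_mem_Icc.2 hT, hr'⟩
    fun _ hu => ⟨hu.1, h.trans hu.2⟩

theorem le_apply_firstHit (hτ : MonotoneOn τ (Icc 0 T))
    (hrc : ∀ t ∈ Ico 0 T, Tendsto τ (𝓝[>] t) (𝓝 (τ t))) (hT : 0 ≤ T) (hr : r ≤ τ T) :
    r ≤ τ (firstHit τ T r) := by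
  have hmem := firstHit_mem_Icc hT hr
  rcases hmem.2.eq_or_lt with heq | hlt
  · rwa [heq]
  refine ge_of_tendsto (hrc _ ⟨hmem.1, hlt⟩) ?_
  filter_upwards [Ioo_mem_nhdsGT hlt] with v hv
  obtain ⟨u, hu, huv⟩ :=
    exists_lt_of_csInf_lt (s := {u ∈ Icc 0 T | r ≤ τ u}) ⟨T, right_mem_Icc.2 hT, hr⟩ hv.1
  exact hu.2.trans (hτ hu.1 ⟨hmem.1.trans hv.1.le, hv.2.le⟩ huv.le)

theorem sSup_image_Ico_firstHit_le (hT : 0 ≤ T) (hr : r ∈ Icc 0 (τ T)) :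
    sSup (τ '' Ico 0 (firstHit τ T r)) ≤ r := by
  rcases (Ico 0 (firstHit τ T r)).eq_empty_or_nonempty with h | h
  · rw [h, image_empty, Real.sSup_empty]
    exact hr.1
  refine csSup_le (h.image τ) (forall_mem_image.2 fun u hu => not_lt.1 fun hlt => ?_)
  exact notMem_of_lt_csInf hu.2 ⟨0, fun _ hv => hv.1.1⟩
    ⟨⟨hu.1, hu.2.le.trans (firstHit_mem_Icc hT hr.2).2⟩, hlt.le⟩

theorem pVar_le_of_firstHit {y : ℝ → E} (hp : 0 < p) (hτ : MonotoneOn τ (Icc 0 T))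
    (hrc : ∀ t ∈ Ico 0 T, Tendsto τ (𝓝[>] t) (𝓝 (τ t))) (hT : 0 ≤ T) (hτ0 : τ 0 = 0)
    {B : ℝ → ℝ≥0∞} (hjump : ∀ t ∈ Ioc 0 T, sSup (τ '' Ico 0 t) < τ t →
      pVar p y (sSup (τ '' Ico 0 t)) (τ t) ≤ B t)
    (hr : r ∈ Icc 0 (τ T)) : pVar p y r (τ (firstHit τ T r)) ≤ B (firstHit τ T r) := by
  have ht := firstHit_mem_Icc hT hr.2
  have hLr := sSup_image_Ico_firstHit_le hT hr
  have hrτ := le_apply_firstHit hτ hrc hT hr.2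
  refine (pVar_anti_left hLr hrτ).trans ?_
  rcases (hLr.trans hrτ).eq_or_lt with heq | hjmp
  · rw [heq, pVar_self hp]
    exact zero_le
  have ht0 : 0 < firstHit τ T r := ht.1.lt_of_ne fun h => by simp [← h, hτ0] at hjmp
  exact hjump _ ⟨ht0, ht.2⟩ hjmp

theorem tendsto_comp_nhdsLT_sSup_image_Ico {y : ℝ → E} {S t : ℝ}
    (hτ : MonotoneOn τ (Icc 0 T)) (hmaps : MapsTo τ (Icc 0 T) (Icc 0 S))
    (hy : ContinuousOn y (Icc 0 S)) (ht : t ∈ Ioc 0 T) :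
    Tendsto (y ∘ τ) (𝓝[<] t) (𝓝 (y (sSup (τ '' Ico 0 t)))) := by
  have hlim := (hτ.mono (Icc_subset_Icc_right ht.2)).tendsto_nhdsLT_sSup_image_Ico ht.1
  have hev : ∀ᶠ u in 𝓝[<] t, τ u ∈ Icc 0 S := by
    filter_upwards [Ioo_mem_nhdsLT ht.1] with u hu
    exact hmaps ⟨hu.1.le, hu.2.le.trans ht.2⟩
  exact (hy _ (isClosed_Icc.mem_of_tendsto hlim hev)).tendsto.comp
    (tendsto_nhdsWithin_iff.2 ⟨hlim, hev⟩)

theorem sum_jump_rpow_le_pVar_comp {y : ℝ → E} {S : ℝ} (hp : 0 < p)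
    (hτ : MonotoneOn τ (Icc 0 T)) (hτ0 : τ 0 = 0) (hmaps : MapsTo τ (Icc 0 T) (Icc 0 S))
    (hy : ContinuousOn y (Icc 0 S)) {F : Finset ℝ} (hF : ∀ t ∈ F, t ∈ Icc 0 T) :
    ∑ t ∈ F, edist (y (sSup (τ '' Ico 0 t))) (y (τ t)) ^ p ≤ pVar p (y ∘ τ) 0 T := by
  rw [← Finset.sum_erase F (a := 0) (by simp [hτ0, ENNReal.zero_rpow_of_pos hp])]
  refine sum_edist_rpow_le_pVar_of_tendsto
    (fun t ht => tendsto_comp_nhdsLT_sSup_image_Ico hτ hmaps hy ht) fun t ht => ?_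
  have ht' := hF t (Finset.mem_of_mem_erase ht)
  exact ⟨ht'.1.lt_of_ne' (Finset.ne_of_mem_erase ht), ht'.2⟩

end TimeChange

theorem three_rpow_mul_one_add_le {η : ℝ} (hp : 0 ≤ p) (hη : 0 ≤ η) :
    (3 : ℝ≥0∞) ^ (p - 1) * (1 + 2 * ENNReal.ofReal η ^ p) ≤
      ENNReal.ofReal ((1 + (2 : ℝ) ^ p + (3 : ℝ) ^ (p - 1)) +
        η ^ p * ((1 + (2 : ℝ) ^ p + (3 : ℝ) ^ (p - 1)) + (3 : ℝ) ^ (p - 1))) := by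
  rw [ENNReal.ofReal_rpow_of_nonneg hη hp, ← ENNReal.ofReal_ofNat 2, ← ENNReal.ofReal_one,
    ← ENNReal.ofReal_mul zero_le_two, ← ENNReal.ofReal_add zero_le_one (by positivity),
    ← ENNReal.ofReal_ofNat 3, ENNReal.ofReal_rpow_of_pos three_pos,
    ← ENNReal.ofReal_mul (by positivity)]
  refine ENNReal.ofReal_le_ofReal ?_
  have h2 : (0 : ℝ) ≤ 2 ^ p := by positivity
  have hηp : 0 ≤ η ^ p := by positivity
  nlinarith [mul_nonneg hηp h2]

end PVariation

theorem pvar_interpolated_bound_general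
    {E : Type*} [MetricSpace E] (p T S η : ℝ) (hp : 1 ≤ p) (hT : 0 < T)
    (hη : 1 ≤ η)
    (τ : ℝ → ℝ) (y : ℝ → E)
    (hτmono : MonotoneOn τ (Set.Icc 0 T))
    (hτrc : ∀ t ∈ Set.Ico 0 T, Filter.Tendsto τ (nhdsWithin t (Set.Ioi t)) (nhds (τ t)))
    (hτ0 : τ 0 = 0) (hτT : τ T = S)
    (hy : ContinuousOn y (Set.Icc 0 S))
    (hjump : ∀ t ∈ Set.Ioc (0 : ℝ) T, sSup (τ '' Set.Ico 0 t) < τ t →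
      pVarNorm p y (sSup (τ '' Set.Ico 0 t)) (τ t)
        ≤ ENNReal.ofReal (η * dist (y (sSup (τ '' Set.Ico 0 t))) (y (τ t)))) :
    pVar p y 0 S
      ≤ ENNReal.ofReal ((1 + (2 : ℝ) ^ p + (3 : ℝ) ^ (p - 1))
            + η ^ p * ((1 + (2 : ℝ) ^ p + (3 : ℝ) ^ (p - 1)) + (3 : ℝ) ^ (p - 1))) *
          pVar p (y ∘ τ) 0 T := by
  have hp0 : 0 < p := by linarith
  have hmaps : MapsTo τ (Icc 0 T) (Icc 0 S) := fun u hu =>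
    ⟨hτ0 ▸ hτmono (left_mem_Icc.2 hT.le) hu hu.1, hτT ▸ hτmono hu (right_mem_Icc.2 hT.le) hu.2⟩
  set V := pVar p (y ∘ τ) 0 T
  set J : ℝ → ℝ≥0∞ := fun t => edist (y (sSup (τ '' Ico 0 t))) (y (τ t)) ^ p
  rw [pVar_eq_iSup_subdivision]
  refine iSup_le fun P => ?_
  set g := fun i => firstHit τ T (P.t i)
  have hPT : ∀ i, P.t i ∈ Icc 0 (τ T) := fun i => hτT ▸ P.t_mem_Icc i
  have hgT : ∀ i, g i ∈ Icc 0 T := fun i => firstHit_mem_Icc hT.le (hPT i).2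
  have hg : Monotone g := fun i j hij => firstHit_mono hT.le (hPT j).2 (P.mono hij)
  have hB : ∀ i, pVar p y (P.t i) (τ (g i)) ≤ ENNReal.ofReal η ^ p * J (g i) := fun i =>
    pVar_le_of_firstHit hp0 hτmono hτrc hT.le hτ0
      (fun t ht hlt => pVar_le_of_pVarNorm_le hp0 (by linarith) (hjump t ht hlt)) (hPT i)
  calc P.sum p y
      ≤ 3 ^ (p - 1) * (∑ i ∈ Finset.range P.n, edist ((y ∘ τ) (g i)) ((y ∘ τ) (g (i + 1))) ^ p
          + 2 * ∑ t ∈ (Finset.range (P.n + 1)).image g, ENNReal.ofReal η ^ p * J t) :=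
        sum_edist_rpow_le_of_detour hp hg P.mono
          (fun i => le_apply_firstHit hτmono hτrc hT.le (hPT i).2) hB P.n
    _ ≤ 3 ^ (p - 1) * (V + 2 * (ENNReal.ofReal η ^ p * V)) := by
        rw [← Finset.mul_sum]
        gcongr
        · exact sum_range_edist_rpow_le_pVar hg hgT P.n
        · refine sum_jump_rpow_le_pVar_comp hp0 hτmono hτ0 hmaps hy fun t ht => ?_
          obtain ⟨i, -, rfl⟩ := Finset.mem_image.1 ht
          exact hgT i
    _ = 3 ^ (p - 1) * (1 + 2 * ENNReal.ofReal η ^ p) * V := by ring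
    _ ≤ _ := by
        gcongr
        exact three_rpow_mul_one_add_le hp0.le (by linarith)

/-- Second part of Lemma 2.14 of the paper.  Let `τ : [0,T] → [0,S]` be nondecreasing,
right-continuous, with `τ 0 = 0`, `τ T = S`, let `y : [0,S] → E` be continuous, and
`x := y ∘ τ`.  If `η ≥ 1` is such that for every jump time `t` of `τ` (with
`τ(t−) = sSup (τ '' [0,t))`) one has `‖y|_{[τ(t−),τ(t)]}‖_{p-var} ≤ η·d(y(τ(t−)), y(τ(t)))`,
then, with `R = 1 + 2^p + 3^(p-1)`, `‖y‖ₚ^p ≤ (R + η^p (R + 3^(p-1))) ‖x‖ₚ^p`. -/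
theorem pvar_interpolated_bound
    {E : Type*} [MetricSpace E] (p T S η : ℝ) (hp : 1 ≤ p) (hT : 0 < T) (hS : 0 < S)
    (hη : 1 ≤ η)
    (τ : ℝ → ℝ) (y : ℝ → E)
    (hτmono : MonotoneOn τ (Set.Icc 0 T))
    (hτrc : ∀ t ∈ Set.Ico 0 T, Filter.Tendsto τ (nhdsWithin t (Set.Ioi t)) (nhds (τ t)))
    (hτ0 : τ 0 = 0) (hτT : τ T = S)
    (hy : ContinuousOn y (Set.Icc 0 S))
    (hjump : ∀ t ∈ Set.Ioc (0 : ℝ) T, sSup (τ '' Set.Ico 0 t) < τ t →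
      pVarNorm p y (sSup (τ '' Set.Ico 0 t)) (τ t)
        ≤ ENNReal.ofReal (η * dist (y (sSup (τ '' Set.Ico 0 t))) (y (τ t)))) :
    pVar p y 0 S
      ≤ ENNReal.ofReal ((1 + (2 : ℝ) ^ p + (3 : ℝ) ^ (p - 1))
            + η ^ p * ((1 + (2 : ℝ) ^ p + (3 : ℝ) ^ (p - 1)) + (3 : ℝ) ^ (p - 1))) *
          pVar p (y ∘ τ) 0 T :=
  pvar_interpolated_bound_general p T S η hp hT hη τ y hτmono hτrc hτ0 hτT hy hjump
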